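/- arXiv:2012.03412 — 2 statements merged into one kernel-verified Lean document; each statement's English description precedes it below -/
import Mathlib

section
/- Let p \ne 0, and a_1,...,a_m, q_1,...,q_m satisfy \sum a_k = 0 and c_1 := \sum a_k q_k \ne 0. Let w(t) with constant term 1 satisfy F(t) = \sum_{k=1}^m a_k w(t)^{-q_k/p}, where F has zero constant term and nonzero linear coefficient, and define \lambda_n(s) by w(t)^s = \sum_{n\ge 0} \lambda_n(s) F(t)^n. Then (n+1) c_1 \lambda_{n+1}(s) = -ps \lambda_n(s) - \sum_{k=1}^m a_k q_k \sum_{i=1}^n \lambda_{n+1-i}(-q_k/p) \cdot i \cdot \lambda_i(s). -/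
open PowerSeries Finset
noncomputable section

/-- Coefficient-wise composition `f ∘ g` of formal power series; this agrees with the
usual composition when `g` has zero constant term. -/
def scomp (f g : PowerSeries ℂ) : PowerSeries ℂ :=
  PowerSeries.mk fun N => ∑ n ∈ Finset.range (N + 1),
    (PowerSeries.coeff n f) * (PowerSeries.coeff N (g ^ n))

/-- The exponential series `∑ t^n/n!`. -/
def expS : PowerSeries ℂ := PowerSeries.mk fun n => 1 / (n.factorial : ℂ)

/-- The series `log(1+t) = ∑_{n≥1} (-1)^{n+1} t^n / n`. -/
def logS : PowerSeries ℂ := PowerSeries.mk fun n => if n = 0 then 0 else (-1) ^ (n + 1) / (n : ℂ)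

/-- Complex power `φ^q := exp (q · log φ)`, well defined when `φ` has constant term 1. -/
def cpow (φ : PowerSeries ℂ) (q : ℂ) : PowerSeries ℂ :=
  scomp expS (q • scomp logS (φ - 1))

/-- Formal derivative. -/
def D (f : PowerSeries ℂ) : PowerSeries ℂ :=
  PowerSeries.mk fun n => ((n + 1 : ℕ) : ℂ) * PowerSeries.coeff (n + 1) f

/-- Generalized binomial coefficient `binom(t, k) = t(t-1)⋯(t-k+1)/k!`. -/
def gbinom (t : ℂ) (k : ℕ) : ℂ := (∏ j ∈ Finset.range k, (t - j)) / (k.factorial : ℂ)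

/-- The ordinary Bell polynomial `B_{n,k}(x_1, …, x_{n-k+1})`. -/
def ordBell (n k : ℕ) (x : ℕ → ℂ) : ℂ :=
  ∑ i : Fin (n - k + 1) → Fin (n + 1),
    if (∑ j, (i j : ℕ)) = k ∧ (∑ j, (j.1 + 1) * (i j : ℕ)) = n then
      ((k.factorial : ℂ) / ∏ j, ((i j : ℕ).factorial : ℂ)) * ∏ j, x (j.1 + 1) ^ (i j : ℕ)
    else 0

/-!
Put `Λ_s = ∑ λ_n(s) Xⁿ`, so that `w^s = Λ_s ∘ F`. Differentiating `w^s = exp (s log w)` gives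
`w (w^s)' = s w' w^s`, hence differentiating the defining sum of `F` gives `p w F' = -w' (Ψ ∘ F)`
with `Ψ = ∑ a_k q_k Λ_{-q_k/p}`. By the chain rule `p w (w^s)' = (Λ_s' ∘ F) p w F'`, i.e.
`w' ((p s Λ_s + Λ_s' Ψ) ∘ F) = 0`. Here `w' ≠ 0` because `F'(0) ≠ 0`, and composition with `F` is
injective since `F` has a compositional inverse, so `p s Λ_s + Λ_s' Ψ = 0`. Its `n`-th coefficient
is the recurrence, because `Ψ(0) = c₁`.
-/

namespace PowerSeries

variable {R : Type*} [CommRing R]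

theorem coeff_subst_of_constantCoeff_eq_zero {f g : R⟦X⟧} (hg : constantCoeff g = 0) (N : ℕ) :
    coeff N (f.subst g) = ∑ n ∈ range (N + 1), coeff n f * coeff N (g ^ n) := by
  rw [coeff_subst' (HasSubst.of_constantCoeff_zero' hg)]
  refine finsum_eq_sum_of_support_subset _ fun n hn => ?_
  obtain ⟨h, rfl⟩ := X_dvd_iff.mpr hg
  contrapose! hn
  simp only [Function.mem_support, not_not, mul_pow, coeff_X_pow_mul', smul_eq_mul]
  rw [if_neg (by simpa using hn), mul_zero]

theorem eq_zero_of_subst_eq_zero {P f : R⟦X⟧} (hP : constantCoeff P = 0)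
    (hP' : IsUnit (coeff 1 P)) (h : f.subst P = 0) : f = 0 := by
  have hPs := HasSubst.of_constantCoeff_zero' hP
  have hQ := HasSubst.substInvOfIsUnit P hP'
  calc f = f.subst (P.subst (P.substInvOfIsUnit hP')) := by
        rw [subst_substInvOfIsUnit_right P hP hP', X_subst]
    _ = 0 := by rw [← subst_comp_subst_apply hPs hQ, h, ← coe_substAlgHom hQ, map_zero]

theorem coeff_derivative_mul (f g : R⟦X⟧) (n : ℕ) :
    coeff n (d⁄dX R f * g) = ∑ i ∈ Icc 1 (n + 1), coeff (n + 1 - i) g * i * coeff i f := by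
  rw [coeff_mul, Finset.Nat.sum_antidiagonal_eq_sum_range_succ_mk, range_eq_Ico,
    ← Finset.sum_Ico_add_right_sub_eq (c := 1)]
  refine sum_congr (by ext; simp) fun i hi => ?_
  obtain ⟨j, rfl⟩ : ∃ j, i = j + 1 := ⟨i - 1, by simp at hi; omega⟩
  simp only [add_tsub_cancel_right, coeff_derivative, Nat.cast_add, Nat.cast_one]
  rw [show n - j = n + 1 - (j + 1) by omega]
  ring

variable {A : Type*} [CommRing A] [Algebra ℚ A]

theorem one_add_X_mul_derivative_log : (1 + X) * d⁄dX A (log A) = 1 := by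
  ext (_ | n)
  · simp [deriv_log]
  · rw [add_mul, one_mul, map_add, coeff_succ_X_mul, deriv_log]
    simp [pow_succ]

theorem mul_derivative_logOf {f : A⟦X⟧} (hf : constantCoeff f = 1) :
    f * d⁄dX A (logOf f) = d⁄dX A f := by
  have hf1 : constantCoeff (f - 1) = 0 := by rw [map_sub, hf, map_one, sub_self]
  have hs := HasSubst.of_constantCoeff_zero' hf1
  have hf' : (1 + X : A⟦X⟧).subst (f - 1) = f := by
    rw [← coe_substAlgHom hs, map_add, map_one, coe_substAlgHom hs, subst_X hs]; ring
  rw [logOf_eq, derivative_subst hs, map_sub, derivative_one, sub_zero, ← mul_assoc]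
  nth_rw 1 [← hf']
  rw [← coe_substAlgHom hs, ← map_mul, one_add_X_mul_derivative_log, map_one, one_mul]

end PowerSeries

theorem scomp_eq_subst (f : ℂ⟦X⟧) {g : ℂ⟦X⟧} (hg : constantCoeff g = 0) :
    scomp f g = f.subst g := by
  ext N
  rw [scomp, coeff_mk, coeff_subst_of_constantCoeff_eq_zero hg]

theorem expS_eq_exp : expS = exp ℂ := by
  ext n
  simp [expS]

theorem logS_eq_log : logS = log ℂ := by
  ext n
  simp [logS]

theorem cpow_eq_subst_exp {φ : ℂ⟦X⟧} (hφ : constantCoeff φ = 1) (q : ℂ) :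
    cpow φ q = (exp ℂ).subst (q • logOf φ) := by
  have hφ1 : constantCoeff (φ - 1) = 0 := by rw [map_sub, hφ, map_one, sub_self]
  have hL : constantCoeff (q • logOf φ) = 0 := by
    rw [smul_eq_C_mul, map_mul, constantCoeff_logOf hφ, mul_zero]
  rw [cpow, scomp_eq_subst _ hφ1, logS_eq_log, ← logOf_eq, scomp_eq_subst _ hL, expS_eq_exp]

theorem mul_derivative_cpow {φ : ℂ⟦X⟧} (hφ : constantCoeff φ = 1) (q : ℂ) :
    φ * d⁄dX ℂ (cpow φ q) = q • (cpow φ q * d⁄dX ℂ φ) := by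
  have hL : constantCoeff (q • logOf φ) = 0 := by
    rw [smul_eq_C_mul, map_mul, constantCoeff_logOf hφ, mul_zero]
  rw [cpow_eq_subst_exp hφ, derivative_subst (HasSubst.of_constantCoeff_zero' hL),
    derivative_exp, Derivation.map_smul, ← mul_derivative_logOf hφ, smul_eq_C_mul,
    smul_eq_C_mul, smul_eq_C_mul]
  ring

theorem mul_derivative_sum_smul_cpow {ι : Type*} (s : Finset ι) (a q : ι → ℂ) {p : ℂ}
    (hp : p ≠ 0) {w : ℂ⟦X⟧} (hw : constantCoeff w = 1) :
    p • (w * d⁄dX ℂ (∑ k ∈ s, a k • cpow w (-q k / p))) =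
      -(d⁄dX ℂ w * ∑ k ∈ s, (a k * q k) • cpow w (-q k / p)) := by
  rw [map_sum, mul_sum, smul_sum, mul_sum, ← sum_neg_distrib]
  refine sum_congr rfl fun k _ => ?_
  have hpq : C p * C (-q k / p) * C (a k) = -C (a k * q k) := by
    rw [← map_mul, ← map_mul, ← map_neg]
    congr 1
    field_simp
  have h := mul_derivative_cpow hw (-q k / p)
  rw [smul_eq_C_mul] at h
  rw [Derivation.map_smul, smul_eq_C_mul, smul_eq_C_mul, smul_eq_C_mul]
  linear_combination C (a k) * C p * h + (cpow w (-q k / p) * d⁄dX ℂ w) * hpq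

theorem smul_add_derivative_mul_eq_zero_of_cpow_eq_subst {ι : Type*} (s : Finset ι)
    (a q : ι → ℂ) {p : ℂ} (hp : p ≠ 0) {w F : ℂ⟦X⟧} (hw : constantCoeff w = 1)
    (hF : F = ∑ k ∈ s, a k • cpow w (-q k / p))
    (hF0 : constantCoeff F = 0) (hF1 : coeff 1 F ≠ 0)
    (Λ : ℂ → ℂ⟦X⟧) (hΛ : ∀ t, cpow w t = (Λ t).subst F) (t : ℂ) :
    (p * t) • Λ t + d⁄dX ℂ (Λ t) * ∑ k ∈ s, (a k * q k) • Λ (-q k / p) = 0 := by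
  have hFs := HasSubst.of_constantCoeff_zero' hF0
  have hDF := mul_derivative_sum_smul_cpow s a q hp hw
  rw [← hF] at hDF
  have hDw : d⁄dX ℂ w ≠ 0 := by
    intro h0
    have hw0 : w ≠ 0 := fun h => by simp [h] at hw
    rw [h0, zero_mul, neg_zero, smul_eq_zero, or_iff_right hp, mul_eq_zero,
      or_iff_right hw0] at hDF
    apply hF1
    simpa [coeff_derivative] using congrArg (coeff 0) hDF
  have hchain : d⁄dX ℂ (cpow w t) = (d⁄dX ℂ (Λ t)).subst F * d⁄dX ℂ F := by
    rw [hΛ, derivative_subst hFs]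
  have hcpow := mul_derivative_cpow hw t
  apply eq_zero_of_subst_eq_zero hF0 hF1.isUnit
  rw [← coe_substAlgHom hFs, map_add, map_smul, map_mul, map_sum]
  simp only [map_smul, coe_substAlgHom, ← hΛ]
  refine (mul_eq_zero.mp ?_).resolve_left hDw
  rw [smul_eq_C_mul, map_mul]
  rw [smul_eq_C_mul] at hDF hcpow
  linear_combination -(C p * hcpow) + C p * w * hchain + (d⁄dX ℂ (Λ t)).subst F * hDF

theorem stmt7_general (m : ℕ) (p : ℂ) (hp : p ≠ 0) (a q : ℕ → ℂ)
    (w F : PowerSeries ℂ) (hw : PowerSeries.constantCoeff w = 1)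
    (hFdef : F = ∑ k ∈ Finset.Icc 1 m, a k • cpow w (-(q k) / p))
    (hF0 : PowerSeries.constantCoeff F = 0) (hF1 : PowerSeries.coeff 1 F ≠ 0)
    (lam : ℕ → ℂ → ℂ) (hlam0 : ∀ s : ℂ, lam 0 s = 1)
    (hlam : ∀ (s : ℂ) (N : ℕ), PowerSeries.coeff N (cpow w s) =
      ∑ n ∈ Finset.range (N + 1), lam n s * PowerSeries.coeff N (F ^ n)) :
    ∀ (n : ℕ) (s : ℂ),
      ((n : ℂ) + 1) * (∑ k ∈ Finset.Icc 1 m, a k * q k) * lam (n + 1) s =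
        -(p * s) * lam n s -
          ∑ k ∈ Finset.Icc 1 m, a k * q k *
            ∑ i ∈ Finset.Icc 1 n, lam (n + 1 - i) (-(q k) / p) * (i : ℂ) * lam i s := by
  intro n s
  set Λ : ℂ → ℂ⟦X⟧ := fun t => mk fun i => lam i t
  have hΛ (t : ℂ) : cpow w t = (Λ t).subst F := by
    ext N
    rw [hlam, coeff_subst_of_constantCoeff_eq_zero hF0]
    simp only [Λ, coeff_mk]
  have hode := congrArg (coeff n)
    (smul_add_derivative_mul_eq_zero_of_cpow_eq_subst _ a q hp hw hFdef hF0 hF1 Λ hΛ s)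
  rw [map_add, map_smul, coeff_derivative_mul, sum_Icc_succ_top (by omega), map_zero] at hode
  simp only [Λ, coeff_mk, map_sum, map_smul, smul_eq_mul, Nat.sub_self, hlam0, mul_one] at hode
  have hswap : ∑ i ∈ Icc 1 n, (∑ k ∈ Icc 1 m, a k * q k * lam (n + 1 - i) (-q k / p)) * i * lam i s
      = ∑ k ∈ Icc 1 m, a k * q k * ∑ i ∈ Icc 1 n, lam (n + 1 - i) (-q k / p) * i * lam i s := by
    simp_rw [sum_mul, mul_sum]
    rw [sum_comm]
    exact sum_congr rfl fun _ _ => sum_congr rfl fun _ _ => by ring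
  rw [hswap] at hode
  push_cast at hode
  linear_combination hode

/-- The recurrence `(n+1) c₁ λ_{n+1}(s) = -ps λ_n(s)
- ∑_k a_k q_k ∑_{i=1}^n λ_{n+1-i}(-q_k/p) · i · λ_i(s)`. -/
theorem stmt7 (m : ℕ) (hm : 1 ≤ m) (p : ℂ) (hp : p ≠ 0) (a q : ℕ → ℂ)
    (hsum : ∑ k ∈ Finset.Icc 1 m, a k = 0)
    (hc1 : ∑ k ∈ Finset.Icc 1 m, a k * q k ≠ 0)
    (w F : PowerSeries ℂ) (hw : PowerSeries.constantCoeff w = 1)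
    (hFdef : F = ∑ k ∈ Finset.Icc 1 m, a k • cpow w (-(q k) / p))
    (hF0 : PowerSeries.constantCoeff F = 0) (hF1 : PowerSeries.coeff 1 F ≠ 0)
    (lam : ℕ → ℂ → ℂ) (hlam0 : ∀ s : ℂ, lam 0 s = 1)
    (hlam : ∀ (s : ℂ) (N : ℕ), PowerSeries.coeff N (cpow w s) =
      ∑ n ∈ Finset.range (N + 1), lam n s * PowerSeries.coeff N (F ^ n)) :
    ∀ (n : ℕ) (s : ℂ),
      ((n : ℂ) + 1) * (∑ k ∈ Finset.Icc 1 m, a k * q k) * lam (n + 1) s =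
        -(p * s) * lam n s -
          ∑ k ∈ Finset.Icc 1 m, a k * q k *
            ∑ i ∈ Finset.Icc 1 n, lam (n + 1 - i) (-(q k) / p) * (i : ℂ) * lam i s :=
  stmt7_general m p hp a q w F hw hFdef hF0 hF1 lam hlam0 hlam
end
end

section
/- Let p \ne 0, q \ne r be complex numbers, and set m = 2 with a_1 = -a_2 = 1/(r-q), q_1 = q, q_2 = r in the \lambda_n(s) setup. Then for all n \ge 1, \lambda_n(s) = (ps/n!) \prod_{k=1}^{n-1} (ps + kq + (n-k)r). -/
open PowerSeries Finset
noncomputable section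

/-! The exponent law `w^(a+b) = w^a w^b` turns the defining relation of `F` into
`w^(s - q/p) - w^(s - r/p) = (r - q) F w^s`; comparing `F`-expansions (which are unique since `F`
has order exactly one) gives `λ_{n+1}(s - q/p) - λ_{n+1}(s - r/p) = (r - q) λ_n(s)`, and the
closed form satisfies the same recurrence. Each `λ_n` is a polynomial in `s` vanishing at `0` for
`n ≥ 1`, and a polynomial is determined by its value at `0` and its differences with step
`(q - r)/p ≠ 0`, so induction on `n` finishes the proof.

The exponent law holds modulo `X^(N+1)` for every `N`: there series without constant
term are nilpotent, and `scomp expS` becomes the nilpotent exponential, which is additive. -/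

namespace PowerSeries

theorem coeff_pow_of_lt {R : Type*} [CommSemiring R] {f : R⟦X⟧} (hf : constantCoeff f = 0)
    {n N : ℕ} (h : N < n) : coeff N (f ^ n) = 0 :=
  X_pow_dvd_iff.mp (pow_dvd_pow_of_dvd (X_dvd_iff.mpr hf) n) N h

theorem coeff_pow_self {R : Type*} [CommSemiring R] {f : R⟦X⟧} (hf : constantCoeff f = 0)
    (n : ℕ) : coeff n (f ^ n) = coeff 1 f ^ n := by
  obtain ⟨g, rfl⟩ := X_dvd_iff.mpr hf
  rw [mul_pow, coeff_X_pow_mul', if_pos le_rfl, Nat.sub_self, coeff_zero_eq_constantCoeff,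
    map_pow, ← coeff_zero_eq_constantCoeff, ← coeff_succ_X_mul]

theorem eq_of_forall_mk_X_pow_eq {R : Type*} [CommRing R] {φ ψ : R⟦X⟧}
    (h : ∀ N, Ideal.Quotient.mk (Ideal.span {X ^ (N + 1)}) φ =
      Ideal.Quotient.mk (Ideal.span {X ^ (N + 1)}) ψ) : φ = ψ := by
  ext N
  have hN := h N
  rw [Ideal.Quotient.eq, Ideal.mem_span_singleton, X_pow_dvd_iff] at hN
  exact sub_eq_zero.mp (hN N (Nat.lt_succ_self N))

theorem mk_X_pow_pow_eq_zero {R : Type*} [CommRing R] {f : R⟦X⟧} (hf : constantCoeff f = 0)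
    (N : ℕ) : Ideal.Quotient.mk (Ideal.span {X ^ (N + 1)}) f ^ (N + 1) = 0 := by
  rw [← map_pow, Ideal.Quotient.eq_zero_iff_mem, Ideal.mem_span_singleton]
  exact pow_dvd_pow_of_dvd (X_dvd_iff.mpr hf) _

end PowerSeries

theorem coeff_scomp_of_le (f : ℂ⟦X⟧) {g : ℂ⟦X⟧} (hg : constantCoeff g = 0) {N M : ℕ}
    (h : N ≤ M) :
    coeff N (scomp f g) = ∑ n ∈ range (M + 1), coeff n f * coeff N (g ^ n) := by
  rw [scomp, coeff_mk]
  refine sum_subset (range_subset_range.mpr (by omega)) fun n _ hn => ?_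
  rw [coeff_pow_of_lt hg (by simp at hn; omega), mul_zero]

theorem scomp_sub (f₁ f₂ g : ℂ⟦X⟧) :
    scomp (f₁ - f₂) g = scomp f₁ g - scomp f₂ g := by
  ext N
  simp only [scomp, coeff_mk, map_sub, sub_mul, sum_sub_distrib]

theorem scomp_smul (c : ℂ) (f g : ℂ⟦X⟧) : scomp (c • f) g = c • scomp f g := by
  ext N
  simp only [scomp, coeff_mk, coeff_smul, smul_eq_mul, mul_sum, mul_assoc]

theorem scomp_one (g : ℂ⟦X⟧) : scomp 1 g = 1 := by
  ext N
  rw [scomp, coeff_mk, sum_eq_single_of_mem 0 (by simp) fun n _ hn => by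
    rw [coeff_one, if_neg hn, zero_mul]]
  simp

theorem scomp_X_mul (f : ℂ⟦X⟧) {g : ℂ⟦X⟧} (hg : constantCoeff g = 0) :
    scomp (X * f) g = g * scomp f g := by
  ext N
  calc coeff N (scomp (X * f) g)
      = ∑ n ∈ range (N + 1), coeff n f * coeff N (g ^ (n + 1)) := by
        rw [coeff_scomp_of_le _ hg (Nat.le_succ N), sum_range_succ']
        simp [coeff_succ_X_mul]
    _ = ∑ n ∈ range (N + 1), ∑ ab ∈ antidiagonal N,
          coeff n f * (coeff ab.1 g * coeff ab.2 (g ^ n)) := by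
        simp only [pow_succ', coeff_mul, mul_sum]
    _ = coeff N (g * scomp f g) := by
        rw [coeff_mul, sum_comm]
        refine sum_congr rfl fun ab hab => ?_
        rw [coeff_scomp_of_le _ hg (M := N)
          (by rw [HasAntidiagonal.mem_antidiagonal] at hab; omega), mul_sum]
        exact sum_congr rfl fun n _ => by ring

theorem scomp_eq_zero {f g : ℂ⟦X⟧} (hg0 : constantCoeff g = 0) (hg1 : coeff 1 g ≠ 0)
    (h : scomp f g = 0) : f = 0 := by
  ext n
  induction n using Nat.strong_induction_on with
  | _ n ih =>
    have hn := congrArg (coeff n) h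
    rw [scomp, coeff_mk, sum_range_succ, sum_eq_zero fun k hk => by
      rw [ih k (mem_range.mp hk), map_zero, zero_mul], zero_add, coeff_pow_self hg0,
      map_zero] at hn
    simpa [hg1] using hn

theorem scomp_left_injective {g : ℂ⟦X⟧} (hg0 : constantCoeff g = 0) (hg1 : coeff 1 g ≠ 0) :
    Function.Injective fun f => scomp f g := fun f₁ f₂ h =>
  sub_eq_zero.mp (scomp_eq_zero hg0 hg1 (by rw [scomp_sub]; exact sub_eq_zero.mpr h))

theorem mk_scomp_expS {f : ℂ⟦X⟧} (hf : constantCoeff f = 0) (N : ℕ) :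
    Ideal.Quotient.mk (Ideal.span {X ^ (N + 1)}) (scomp expS f) =
      IsNilpotent.exp (Ideal.Quotient.mk (Ideal.span {X ^ (N + 1)}) f) := by
  set π := Ideal.Quotient.mk (Ideal.span {(X : ℂ⟦X⟧) ^ (N + 1)})
  have hsum : ∑ i ∈ range (N + 1), ((i.factorial : ℚ)⁻¹ • π f ^ i) =
      π (∑ i ∈ range (N + 1), (i.factorial : ℚ)⁻¹ • f ^ i) := by
    simp only [map_sum, map_rat_smul, map_pow]
  rw [IsNilpotent.exp_eq_sum (mk_X_pow_pow_eq_zero hf N), hsum, Ideal.Quotient.eq,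
    Ideal.mem_span_singleton, X_pow_dvd_iff]
  intro k hk
  rw [map_sub, sub_eq_zero, coeff_scomp_of_le _ hf (Nat.le_of_lt_succ hk), map_sum]
  simp [expS, Rat.smul_def]

theorem scomp_expS_add {f g : ℂ⟦X⟧} (hf : constantCoeff f = 0) (hg : constantCoeff g = 0) :
    scomp expS (f + g) = scomp expS f * scomp expS g := by
  refine eq_of_forall_mk_X_pow_eq fun N => ?_
  have hfg : constantCoeff (f + g) = 0 := by rw [map_add, hf, hg, add_zero]
  rw [map_mul, mk_scomp_expS hfg, mk_scomp_expS hf, mk_scomp_expS hg, map_add,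
    IsNilpotent.exp_add_of_commute (Commute.all _ _) ⟨_, mk_X_pow_pow_eq_zero hf N⟩
      ⟨_, mk_X_pow_pow_eq_zero hg N⟩]

theorem scomp_expS_zero : scomp expS 0 = 1 := by
  refine eq_of_forall_mk_X_pow_eq fun N => ?_
  rw [mk_scomp_expS (map_zero _), map_zero, map_one, IsNilpotent.exp_zero]

theorem constantCoeff_scomp_logS (f : ℂ⟦X⟧) : constantCoeff (scomp logS f) = 0 := by
  simp [scomp, logS]

theorem cpow_add (φ : ℂ⟦X⟧) (a b : ℂ) : cpow φ (a + b) = cpow φ a * cpow φ b := by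
  have h (c : ℂ) : constantCoeff (c • scomp logS (φ - 1)) = 0 := by
    rw [constantCoeff_smul, constantCoeff_scomp_logS, smul_zero]
  rw [cpow, cpow, cpow, add_smul, scomp_expS_add (h a) (h b)]

theorem cpow_zero (φ : ℂ⟦X⟧) : cpow φ 0 = 1 := by
  rw [cpow, zero_smul, scomp_expS_zero]

abbrev polyFun : Subalgebra ℂ (ℂ → ℂ) := Algebra.adjoin ℂ {id}

theorem id_mem_polyFun : (id : ℂ → ℂ) ∈ polyFun :=
  Algebra.subset_adjoin (Set.mem_singleton _)

theorem exists_eval_of_mem_polyFun {f : ℂ → ℂ} (hf : f ∈ polyFun) :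
    ∃ P : Polynomial ℂ, ∀ s, f s = P.eval s := by
  rw [polyFun, Algebra.adjoin_singleton_eq_range_aeval] at hf
  obtain ⟨P, rfl⟩ := hf
  exact ⟨P, fun s => by simp⟩

theorem Function.Periodic.eq_apply_zero_of_mem_polyFun {f : ℂ → ℂ} {c : ℂ}
    (hper : Function.Periodic f c) (hc : c ≠ 0) (hf : f ∈ polyFun) (s : ℂ) : f s = f 0 := by
  obtain ⟨P, hP⟩ := exists_eval_of_mem_polyFun hf
  have hconst : P = Polynomial.C (f 0) := by
    refine Polynomial.eq_of_infinite_eval_eq _ _ (Set.Infinite.mono ?_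
      (Set.infinite_range_of_injective (f := fun n : ℕ => (n : ℂ) * c) fun m n hmn => ?_))
    · rintro _ ⟨n, rfl⟩
      simp [← hP, hper.nat_mul_eq]
    · exact_mod_cast mul_right_cancel₀ hc hmn
  rw [hP, hconst, Polynomial.eval_C]

theorem eq_of_add_sub_add_eq {u v : ℂ → ℂ} (hu : u ∈ polyFun) (hv : v ∈ polyFun)
    {a b : ℂ} (hab : a ≠ b) (h0 : u 0 = v 0)
    (h : ∀ s, u (s + a) - u (s + b) = v (s + a) - v (s + b)) : u = v := by
  have hper : Function.Periodic (u - v) (a - b) := fun t => by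
    have := h (t - b)
    simp only [Pi.sub_apply, sub_add_cancel, sub_add_eq_add_sub, add_sub_assoc] at this ⊢
    linear_combination this
  funext s
  have := hper.eq_apply_zero_of_mem_polyFun (sub_ne_zero.mpr hab) (sub_mem hu hv) s
  simp only [Pi.sub_apply, h0, sub_self] at this
  exact sub_eq_zero.mp this

theorem coeff_cpow_mem_polyFun (φ : ℂ⟦X⟧) (N : ℕ) :
    (fun s => coeff N (cpow φ s)) ∈ polyFun := by
  set L := scomp logS (φ - 1)
  have hL (s : ℂ) : constantCoeff (s • L) = 0 := by
    rw [constantCoeff_smul, constantCoeff_scomp_logS, smul_zero]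
  have h : (fun s => coeff N (cpow φ s)) =
      ∑ n ∈ range (N + 1), ((n.factorial : ℂ)⁻¹ * coeff N (L ^ n)) • id ^ n := by
    funext s
    rw [cpow, coeff_scomp_of_le expS (hL s) le_rfl, Finset.sum_apply]
    refine sum_congr rfl fun n _ => ?_
    simp only [Pi.smul_apply, Pi.pow_apply, id, smul_pow, coeff_smul, smul_eq_mul, expS, coeff_mk,
      one_div]
    ring
  rw [h]
  exact sum_mem fun n _ => Subalgebra.smul_mem _ (pow_mem id_mem_polyFun n) _

-- The claimed value of `λ_n(s)`, as a function of `x = p s`.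
def lamClosed (q r : ℂ) : ℕ → ℂ → ℂ
  | 0, _ => 1
  | n + 1, x => x / ((n + 1).factorial : ℂ) *
      ∏ k ∈ Icc 1 n, (x + (k : ℂ) * q + ((n + 1 - k : ℕ) : ℂ) * r)

theorem lamClosed_succ_eq_prod_range (q r : ℂ) (n : ℕ) (x : ℂ) :
    lamClosed q r (n + 1) x = x / ((n + 1).factorial : ℂ) *
      ∏ i ∈ range n, (x + ((i : ℂ) + 1) * q + ((n : ℂ) - i) * r) := by
  rw [lamClosed, ← Ico_add_one_right_eq_Icc, prod_Ico_eq_prod_range, add_tsub_cancel_right]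
  refine congrArg _ (prod_congr rfl fun i hi => ?_)
  rw [Nat.cast_sub (by simp at hi; omega)]
  push_cast
  ring

theorem lamClosed_succ_sub (q r : ℂ) (n : ℕ) (x : ℂ) :
    lamClosed q r (n + 1) (x - q) - lamClosed q r (n + 1) (x - r) =
      (r - q) * lamClosed q r n x := by
  set h : ℕ → ℂ := fun i => x + (i : ℂ) * q + ((n : ℂ) - i) * r
  have hq : lamClosed q r (n + 1) (x - q) =
      (x - q) / ((n + 1).factorial : ℂ) * ∏ i ∈ range n, h i := by
    rw [lamClosed_succ_eq_prod_range]
    exact congrArg _ (prod_congr rfl fun i _ => by simp only [h]; ring)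
  have hr : lamClosed q r (n + 1) (x - r) =
      (x - r) / ((n + 1).factorial : ℂ) * ∏ i ∈ range n, h (i + 1) := by
    rw [lamClosed_succ_eq_prod_range]
    exact congrArg _ (prod_congr rfl fun i _ => by simp only [h]; push_cast; ring)
  rw [hq, hr]
  cases n with
  | zero => simp [lamClosed]
  | succ m =>
    have hm : lamClosed q r (m + 1) x =
        x / ((m + 1).factorial : ℂ) * ∏ i ∈ range m, h (i + 1) := by
      rw [lamClosed_succ_eq_prod_range]
      exact congrArg _ (prod_congr rfl fun i _ => by simp only [h]; push_cast; ring)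
    have h0 : h 0 = x + (m + 1) * r := by simp only [h]; push_cast; ring
    have hlast : h (m + 1) = x + (m + 1) * q := by simp only [h]; push_cast; ring
    rw [hm, prod_range_succ', prod_range_succ, h0, hlast, Nat.factorial_succ (m + 1),
      Nat.cast_mul]
    have hfac : ((m + 1).factorial : ℂ) ≠ 0 := Nat.cast_ne_zero.mpr (Nat.factorial_ne_zero _)
    have hm2 : ((m + 1 + 1 : ℕ) : ℂ) ≠ 0 := Nat.cast_ne_zero.mpr (Nat.succ_ne_zero _)
    field_simp
    push_cast
    ring

theorem lamClosed_succ_zero (q r : ℂ) (n : ℕ) : lamClosed q r (n + 1) 0 = 0 := by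
  simp [lamClosed]

theorem lamClosed_comp_mul_mem_polyFun (p q r : ℂ) (n : ℕ) :
    (fun s => lamClosed q r n (p * s)) ∈ polyFun := by
  cases n with
  | zero => exact one_mem _
  | succ n =>
    have hlin (a : ℂ) : (fun s : ℂ => p * s + a) ∈ polyFun := by
      have : (fun s : ℂ => p * s + a) = p • id + algebraMap ℂ (ℂ → ℂ) a := by
        funext s; simp
      rw [this]
      exact add_mem (Subalgebra.smul_mem polyFun id_mem_polyFun p)
        (Subalgebra.algebraMap_mem polyFun a)
    have hprod := prod_mem (t := Icc 1 n) fun (k : ℕ) _ =>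
      hlin ((k : ℂ) * q + ((n + 1 - k : ℕ) : ℂ) * r)
    convert Subalgebra.smul_mem _ (mul_mem (hlin 0) hprod) ((n + 1).factorial : ℂ)⁻¹ using 1
    funext s
    simp only [lamClosed, Pi.smul_apply, Pi.mul_apply, prod_apply, smul_eq_mul, add_zero, add_assoc]
    ring

def IsCpowExpansion (w F : ℂ⟦X⟧) (lam : ℕ → ℂ → ℂ) : Prop :=
  ∀ (s : ℂ) (N : ℕ), coeff N (cpow w s) = ∑ n ∈ range (N + 1), lam n s * coeff N (F ^ n)

theorem IsCpowExpansion.cpow_eq_scomp {w F : ℂ⟦X⟧} {lam : ℕ → ℂ → ℂ}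
    (hlam : IsCpowExpansion w F lam) (s : ℂ) :
    cpow w s = scomp (PowerSeries.mk fun n => lam n s) F := by
  ext N
  simp only [hlam s N, scomp, coeff_mk]

theorem lam_succ_add_sub_lam_succ_add {w F : ℂ⟦X⟧} {lam : ℕ → ℂ → ℂ}
    (hF0 : constantCoeff F = 0) (hF1 : coeff 1 F ≠ 0)
    (hlam : IsCpowExpansion w F lam)
    {a b c : ℂ} (habc : cpow w a - cpow w b = c • F) (n : ℕ) (s : ℂ) :
    lam (n + 1) (s + a) - lam (n + 1) (s + b) = c * lam n s := by
  have key : (PowerSeries.mk fun n => lam n (s + a)) - (PowerSeries.mk fun n => lam n (s + b)) =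
      c • (X * PowerSeries.mk fun n => lam n s) := by
    refine scomp_left_injective hF0 hF1 ?_
    simp only [scomp_sub, scomp_smul, scomp_X_mul _ hF0, ← hlam.cpow_eq_scomp]
    rw [cpow_add, cpow_add, ← mul_sub, habc, mul_smul_comm, mul_comm]
  simpa [coeff_succ_X_mul] using congrArg (coeff (n + 1)) key

theorem lam_succ_zero {w F : ℂ⟦X⟧} {lam : ℕ → ℂ → ℂ}
    (hF0 : constantCoeff F = 0) (hF1 : coeff 1 F ≠ 0)
    (hlam : IsCpowExpansion w F lam) (n : ℕ) :
    lam (n + 1) 0 = 0 := by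
  have key : (PowerSeries.mk fun n => lam n 0) = 1 :=
    scomp_left_injective hF0 hF1 (by simp only [scomp_one, ← hlam.cpow_eq_scomp, cpow_zero])
  simpa using congrArg (coeff (n + 1)) key

theorem lam_mem_polyFun {w F : ℂ⟦X⟧} {lam : ℕ → ℂ → ℂ}
    (hF0 : constantCoeff F = 0) (hF1 : coeff 1 F ≠ 0)
    (hlam : IsCpowExpansion w F lam) (n : ℕ) :
    lam n ∈ polyFun := by
  induction n using Nat.strong_induction_on with
  | _ n ih =>
    have h : lam n = (coeff 1 F ^ n)⁻¹ •
        ((fun s => coeff n (cpow w s)) - ∑ k ∈ range n, coeff n (F ^ k) • lam k) := by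
      funext s
      simp only [hlam s n, sum_range_succ, coeff_pow_self hF0, Pi.smul_apply, Pi.sub_apply,
        Finset.sum_apply, smul_eq_mul, mul_comm (coeff n _)]
      field_simp [pow_ne_zero n hF1]
      ring
    rw [h]
    exact Subalgebra.smul_mem _ (sub_mem (coeff_cpow_mem_polyFun w n)
      (sum_mem fun k hk => Subalgebra.smul_mem _ (ih k (mem_range.mp hk)) _)) _

theorem stmt11_general (p q r : ℂ) (hp : p ≠ 0) (hqr : q ≠ r)
    (w F : PowerSeries ℂ)
    (hF : F = (1 / (r - q)) • (cpow w (-q / p) - cpow w (-r / p)))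
    (hF0 : PowerSeries.constantCoeff F = 0) (hF1 : PowerSeries.coeff 1 F ≠ 0)
    (lam : ℕ → ℂ → ℂ) (hlam0 : ∀ s : ℂ, lam 0 s = 1)
    (hlam : ∀ (s : ℂ) (N : ℕ), PowerSeries.coeff N (cpow w s) =
      ∑ n ∈ Finset.range (N + 1), lam n s * PowerSeries.coeff N (F ^ n)) :
    ∀ (s : ℂ) (n : ℕ), 1 ≤ n →
      lam n s = p * s / (n.factorial : ℂ) *
        ∏ k ∈ Finset.Icc 1 (n - 1), (p * s + (k : ℂ) * q + ((n - k : ℕ) : ℂ) * r) := by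
  have hshift : cpow w (-q / p) - cpow w (-r / p) = (r - q) • F := by
    rw [hF, smul_smul, mul_one_div, div_self (sub_ne_zero.mpr hqr.symm), one_smul]
  have hclosed (n : ℕ) : lam n = fun s => lamClosed q r n (p * s) := by
    induction n with
    | zero => funext s; simp [hlam0, lamClosed]
    | succ n ih =>
      have hmul (s c : ℂ) : p * (s + -c / p) = p * s - c := by field_simp; ring
      refine eq_of_add_sub_add_eq (lam_mem_polyFun hF0 hF1 hlam _)
        (lamClosed_comp_mul_mem_polyFun p q r _) (a := -q / p) (b := -r / p) ?_ ?_ fun s => ?_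
      · rwa [ne_eq, div_left_inj' hp, neg_inj]
      · rw [lam_succ_zero hF0 hF1 hlam, mul_zero, lamClosed_succ_zero]
      · rw [lam_succ_add_sub_lam_succ_add hF0 hF1 hlam hshift, ih, hmul, hmul, lamClosed_succ_sub]
  intro s n hn
  obtain ⟨m, rfl⟩ := Nat.exists_eq_add_of_le' hn
  rw [hclosed, Nat.add_sub_cancel]
  rfl

/-- In the case `m = 2`, `a₁ = -a₂ = 1/(r-q)`, `q₁ = q`, `q₂ = r`,
the coefficients `λ_n(s)` have the closed form
`λ_n(s) = (ps/n!) ∏_{k=1}^{n-1} (ps + kq + (n-k)r)`. -/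
theorem stmt11 (p q r : ℂ) (hp : p ≠ 0) (hqr : q ≠ r)
    (w F : PowerSeries ℂ) (hw : PowerSeries.constantCoeff w = 1)
    (hF : F = (1 / (r - q)) • (cpow w (-q / p) - cpow w (-r / p)))
    (hF0 : PowerSeries.constantCoeff F = 0) (hF1 : PowerSeries.coeff 1 F ≠ 0)
    (lam : ℕ → ℂ → ℂ) (hlam0 : ∀ s : ℂ, lam 0 s = 1)
    (hlam : ∀ (s : ℂ) (N : ℕ), PowerSeries.coeff N (cpow w s) =
      ∑ n ∈ Finset.range (N + 1), lam n s * PowerSeries.coeff N (F ^ n)) :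
    ∀ (s : ℂ) (n : ℕ), 1 ≤ n →
      lam n s = p * s / (n.factorial : ℂ) *
        ∏ k ∈ Finset.Icc 1 (n - 1), (p * s + (k : ℂ) * q + ((n - k : ℕ) : ℂ) * r) :=
  stmt11_general p q r hp hqr w F hF hF0 hF1 lam hlam0 hlam
end
end
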